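/- arXiv:math/0503188 — 3 statements merged into one kernel-verified Lean document; each statement's English description precedes it below -/
import Mathlib

section
/- Let M be a connected smooth manifold, X a smooth vector field on M admitting a complete smooth flow φ, and f : M → ℝ a smooth function such that 1 + (Xf)(x) > 0 for all x ∈ M. Let Y := X/(1 + Xf) and assume Y also admits a complete smooth flow ψ. Then the map h : M → M defined by h(x) := φ_{f(x)}(x) is a C^∞ diffeomorphism of M satisfying h(ψ_t(x)) = φ_t(h(x)) for all t ∈ ℝ and all x ∈ M; in particular, the flow of X is C^∞ flow equivalent to the flow of X/(1 + Xf). -/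
open Manifold

noncomputable section

/-- A smooth vector field on a manifold, seen as a smooth section of the tangent bundle. -/
def IsSmoothVectorField {E : Type*} [NormedAddCommGroup E] [NormedSpace ℝ E]
    {H : Type*} [TopologicalSpace H] (I : ModelWithCorners ℝ E H)
    {M : Type*} [TopologicalSpace M] [ChartedSpace H M] [IsManifold I (⊤ : ℕ∞) M]
    (X : ∀ x : M, TangentSpace I x) : Prop :=
  ContMDiff I I.tangent (⊤ : ℕ∞) (fun x => (⟨x, X x⟩ : TangentBundle I M))

/-- A complete smooth flow of the vector field `X`: a smooth map `φ : ℝ × M → M` with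
`φ 0 = id`, `φ (s+t) = φ s ∘ φ t`, such that for each `x` the curve `t ↦ φ t x` has
derivative `X (φ t x)` at every time `t`. -/
structure IsCompleteSmoothFlow {E : Type*} [NormedAddCommGroup E] [NormedSpace ℝ E]
    {H : Type*} [TopologicalSpace H] (I : ModelWithCorners ℝ E H)
    {M : Type*} [TopologicalSpace M] [ChartedSpace H M] [IsManifold I (⊤ : ℕ∞) M]
    (X : ∀ x : M, TangentSpace I x) (φ : ℝ → M → M) : Prop where
  smooth : ContMDiff (𝓘(ℝ, ℝ).prod I) I (⊤ : ℕ∞) (fun p : ℝ × M => φ p.1 p.2)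
  init : ∀ x, φ 0 x = x
  add : ∀ s t x, φ (s + t) x = φ s (φ t x)
  deriv : ∀ t x, mfderiv 𝓘(ℝ, ℝ) I (fun s => φ s x) t ((1 : ℝ) : TangentSpace 𝓘(ℝ, ℝ) t)
    = X (φ t x)

/-- The derivative of `f` along the vector field `X`, i.e. `(Xf)(x) = df_x (X x)`. -/
def vfDeriv {E : Type*} [NormedAddCommGroup E] [NormedSpace ℝ E]
    {H : Type*} [TopologicalSpace H] (I : ModelWithCorners ℝ E H)
    {M : Type*} [TopologicalSpace M] [ChartedSpace H M] [IsManifold I (⊤ : ℕ∞) M]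
    (X : ∀ x : M, TangentSpace I x) (f : M → ℝ) (x : M) : ℝ :=
  mfderiv I 𝓘(ℝ, ℝ) f x (X x)

section TimeChangeAux

variable {E : Type*} [NormedAddCommGroup E] [NormedSpace ℝ E]
    {H : Type*} [TopologicalSpace H] {I : ModelWithCorners ℝ E H}
    {M : Type*} [TopologicalSpace M] [ChartedSpace H M] [IsManifold I (⊤ : ℕ∞) M]

/-- A curve in a manifold whose manifold derivative vanishes everywhere is constant. -/
theorem timeChange_const_of_mfderiv_zero {c : ℝ → M}
    (hc : ∀ t : ℝ, HasMFDerivAt 𝓘(ℝ, ℝ) I c t 0) (t s : ℝ) : c t = c s := by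
  have hcont : Continuous c := continuous_iff_continuousAt.2 fun u => (hc u).continuousAt
  have hloc : ∀ t₀ : ℝ, ∀ᶠ u in nhds t₀, c u = c t₀ := by
    intro t₀
    have hU : IsOpen (c ⁻¹' (chartAt H (c t₀)).source) :=
      (chartAt H (c t₀)).open_source.preimage hcont
    have ht₀ : t₀ ∈ c ⁻¹' (chartAt H (c t₀)).source := by
      simp [mem_chart_source]
    obtain ⟨ε, hε, hball⟩ := Metric.isOpen_iff.1 hU t₀ ht₀
    have hfd : ∀ u ∈ Metric.ball t₀ ε,
        HasFDerivAt (fun v => extChartAt I (c t₀) (c v)) (0 : ℝ →L[ℝ] E) u := by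
      intro u hu
      have hmem : c u ∈ (chartAt H (c t₀)).source := hball hu
      have h1 := (hasMFDerivAt_extChartAt (I := I) hmem).comp u (hc u)
      exact h1.hasFDerivAt.congr_fderiv (ContinuousLinearMap.comp_zero _)
    have key : ∀ u ∈ Metric.ball t₀ ε,
        extChartAt I (c t₀) (c u) = extChartAt I (c t₀) (c t₀) := by
      intro u hu
      have hb := (convex_ball t₀ ε).norm_image_sub_le_of_norm_hasFDerivWithin_le
        (fun v hv => (hfd v hv).hasFDerivWithinAt)
        (fun v _ => norm_zero.le) (Metric.mem_ball_self hε) hu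
      simp only [norm_zero, zero_mul] at hb
      have := norm_le_zero_iff.1 hb
      rwa [sub_eq_zero] at this
    filter_upwards [Metric.ball_mem_nhds t₀ hε] with u hu
    have h1 : c u ∈ (extChartAt I (c t₀)).source := by
      rw [extChartAt_source]; exact hball hu
    have h2 : c t₀ ∈ (extChartAt I (c t₀)).source := by
      rw [extChartAt_source]; exact mem_chart_source H (c t₀)
    exact (extChartAt I (c t₀)).injOn h1 h2 (key u hu)
  have hopen : IsOpen {u : ℝ | c u = c s} := by
    refine isOpen_iff_mem_nhds.2 fun u hu => ?_
    filter_upwards [hloc u] with v hv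
    rw [hv]; exact hu
  have hclosed : IsClosed {u : ℝ | c u = c s} := by
    rw [← isOpen_compl_iff]
    refine isOpen_iff_mem_nhds.2 fun u hu => ?_
    filter_upwards [hloc u] with v hv
    simp only [Set.mem_compl_iff, Set.mem_setOf_eq] at hu ⊢
    rw [hv]; exact hu
  have huniv : {u : ℝ | c u = c s} = Set.univ :=
    IsClopen.eq_univ ⟨hclosed, hopen⟩ ⟨s, rfl⟩
  exact Set.eq_univ_iff_forall.1 huniv t

variable {X : ∀ x : M, TangentSpace I x} {φ : ℝ → M → M}

theorem IsCompleteSmoothFlow.mdiff_curve (hφ : IsCompleteSmoothFlow I X φ) (x : M) (t : ℝ) :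
    MDifferentiableAt 𝓘(ℝ, ℝ) I (fun s => φ s x) t :=
  ((hφ.smooth.comp (contMDiff_id.prodMk contMDiff_const)).mdifferentiable (by simp)) t

theorem IsCompleteSmoothFlow.mdiff_map (hφ : IsCompleteSmoothFlow I X φ) (s : ℝ) (p : M) :
    MDifferentiableAt I I (φ s) p :=
  ((hφ.smooth.comp (contMDiff_const.prodMk contMDiff_id)).mdifferentiable (by simp)) p

/-- A vector field is invariant under the pushforward by its own flow. -/
theorem IsCompleteSmoothFlow.pushforward (hφ : IsCompleteSmoothFlow I X φ) (s : ℝ) (p : M) :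
    mfderiv I I (φ s) p (X p) = X (φ s p) := by
  have heq : (φ s ∘ fun t : ℝ => φ t p) = fun t => φ (s + t) p :=
    funext fun t => (hφ.add s t p).symm
  have heq2 : ((fun u : ℝ => φ u p) ∘ fun t : ℝ => s + t) = fun t => φ (s + t) p := rfl
  have hid : MDifferentiableAt 𝓘(ℝ, ℝ) 𝓘(ℝ, ℝ) (fun t : ℝ => s + t) 0 :=
    ((differentiable_id.const_add s) 0).mdifferentiableAt
  have hfadd : HasFDerivAt (fun t : ℝ => s + t) (ContinuousLinearMap.id ℝ ℝ) 0 := by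
    simpa using (hasFDerivAt_id (0 : ℝ)).const_add s
  have hadd : mfderiv 𝓘(ℝ, ℝ) 𝓘(ℝ, ℝ) (fun t : ℝ => s + t) 0 = ContinuousLinearMap.id ℝ ℝ :=
    hfadd.hasMFDerivAt.mfderiv
  have hd0 : mfderiv 𝓘(ℝ, ℝ) I (fun t : ℝ => φ t p) 0 (1 : ℝ) = X p :=
    (hφ.deriv 0 p).trans (by rw [hφ.init p])
  have e1 : mfderiv 𝓘(ℝ, ℝ) I (φ s ∘ fun t : ℝ => φ t p) 0 (1 : ℝ)
      = mfderiv I I (φ s) (φ 0 p) (X p) := by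
    erw [mfderiv_comp_apply (f := fun t : ℝ => φ t p) (0 : ℝ) (hφ.mdiff_map s _)
      (hφ.mdiff_curve p 0), hd0]
  have e2 : mfderiv 𝓘(ℝ, ℝ) I ((fun u : ℝ => φ u p) ∘ fun t : ℝ => s + t) 0 (1 : ℝ)
      = X (φ s p) := by
    erw [mfderiv_comp_apply (f := fun t : ℝ => s + t) (0 : ℝ) (hφ.mdiff_curve p _) hid]
    have hone : mfderiv 𝓘(ℝ, ℝ) 𝓘(ℝ, ℝ) (fun t : ℝ => s + t) 0 (1 : ℝ) = (1 : ℝ) := by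
      rw [hadd]; rfl
    rw [hone]
    exact (hφ.deriv (s + 0) p).trans (by rw [add_zero])
  have e3 : mfderiv I I (φ s) (φ 0 p) (X p) = X (φ s p) := by
    rw [← e1, ← e2]
    exact congrArg (fun g : ℝ → M => mfderiv 𝓘(ℝ, ℝ) I g 0 (1 : ℝ)) (heq.trans heq2.symm)
  rw [hφ.init p] at e3
  exact e3

/-- Derivative of `t ↦ φ (a t) (γ t)`. -/
theorem IsCompleteSmoothFlow.comp_mfderiv (hφ : IsCompleteSmoothFlow I X φ)
    {a : ℝ → ℝ} {γ : ℝ → M} {t₀ : ℝ} {a' : ℝ} {v : TangentSpace I (γ t₀)}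
    (ha : HasDerivAt a a' t₀) (hγ : MDifferentiableAt 𝓘(ℝ, ℝ) I γ t₀)
    (hγv : mfderiv 𝓘(ℝ, ℝ) I γ t₀ (1 : ℝ) = v) :
    MDifferentiableAt 𝓘(ℝ, ℝ) I (fun t => φ (a t) (γ t)) t₀ ∧
    mfderiv 𝓘(ℝ, ℝ) I (fun t => φ (a t) (γ t)) t₀ (1 : ℝ)
      = a' • X (φ (a t₀) (γ t₀)) + mfderiv I I (φ (a t₀)) (γ t₀) v := by
  have hamd : MDifferentiableAt 𝓘(ℝ, ℝ) 𝓘(ℝ, ℝ) a t₀ :=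
    ha.differentiableAt.mdifferentiableAt
  have hF : MDifferentiableAt 𝓘(ℝ, ℝ) (𝓘(ℝ, ℝ).prod I) (fun t => (a t, γ t)) t₀ :=
    hamd.prodMk hγ
  have hΦ : MDifferentiableAt (𝓘(ℝ, ℝ).prod I) I (fun p : ℝ × M => φ p.1 p.2) (a t₀, γ t₀) :=
    (hφ.smooth.mdifferentiable (by simp)) (a t₀, γ t₀)
  have hc : MDifferentiableAt 𝓘(ℝ, ℝ) I (fun t => φ (a t) (γ t)) t₀ := hΦ.comp t₀ hF
  refine ⟨hc, ?_⟩
  have h1 := mfderiv_comp_apply (f := fun t => (a t, γ t)) t₀ hΦ hF (1 : ℝ)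
  have h2 : mfderiv 𝓘(ℝ, ℝ) (𝓘(ℝ, ℝ).prod I) (fun t => (a t, γ t)) t₀ (1 : ℝ)
      = ((a', v) : ℝ × E) := by
    rw [hamd.mfderiv_prod hγ]
    refine Prod.ext ?_ ?_
    · show mfderiv 𝓘(ℝ, ℝ) 𝓘(ℝ, ℝ) a t₀ (1 : ℝ) = a'
      rw [ha.hasFDerivAt.hasMFDerivAt.mfderiv]
      exact one_smul ℝ a'
    · exact hγv
  rw [h2] at h1
  have h3 := mfderiv_prod_eq_add_apply (I := 𝓘(ℝ, ℝ)) (I' := I) (I'' := I)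
    (p := (a t₀, γ t₀)) (v := ((a', v) : ℝ × E)) hΦ
  have h4 : mfderiv 𝓘(ℝ, ℝ) I (fun z : ℝ => φ z (γ t₀)) (a t₀) a'
      = a' • X (φ (a t₀) (γ t₀)) := by
    have hm := (mfderiv 𝓘(ℝ, ℝ) I (fun z : ℝ => φ z (γ t₀)) (a t₀)).map_smul a' (1 : ℝ)
    have ha1 : (a' • (1 : ℝ) : TangentSpace 𝓘(ℝ, ℝ) (a t₀)) = a' := mul_one a'
    exact (congrArg (mfderiv 𝓘(ℝ, ℝ) I (fun z : ℝ => φ z (γ t₀)) (a t₀)) ha1.symm).trans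
      (hm.trans (by rw [hφ.deriv (a t₀) (γ t₀)]))
  show (mfderiv 𝓘(ℝ, ℝ) I ((fun p : ℝ × M => φ p.1 p.2) ∘ fun t => (a t, γ t)) t₀) (1 : ℝ) = _
  rw [h1, h3]
  show mfderiv 𝓘(ℝ, ℝ) I (fun z : ℝ => φ z (γ t₀)) (a t₀) a'
      + mfderiv I I (fun z : M => φ (a t₀) z) (γ t₀) v = _
  rw [h4]

end TimeChangeAux

/-- **Lemma 2.2.2.** Let `X` be a smooth vector field on a connected manifold `M` with complete
smooth flow `φ`, and let `f : M → ℝ` be smooth with `1 + Xf > 0` everywhere.  If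
`Y = X / (1 + Xf)` also has a complete smooth flow `ψ`, then `h x := φ (f x) x` is a `C^∞`
diffeomorphism of `M` conjugating `ψ` to `φ`: `h (ψ t x) = φ t (h x)`.  In particular the flow
of `X` is `C^∞` flow equivalent to that of `X / (1 + Xf)`. -/

theorem timeChange_flow_equivalent
    {E : Type*} [NormedAddCommGroup E] [NormedSpace ℝ E]
    {H : Type*} [TopologicalSpace H] (I : ModelWithCorners ℝ E H)
    {M : Type*} [TopologicalSpace M] [ChartedSpace H M] [IsManifold I (⊤ : ℕ∞) M]
    [ConnectedSpace M]
    (X : ∀ x : M, TangentSpace I x) (hX : IsSmoothVectorField I X)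
    (φ : ℝ → M → M) (hφ : IsCompleteSmoothFlow I X φ)
    (f : M → ℝ) (hf : ContMDiff I 𝓘(ℝ, ℝ) (⊤ : ℕ∞) f)
    (hpos : ∀ x, 0 < 1 + vfDeriv I X f x)
    (Y : ∀ x : M, TangentSpace I x) (hY : ∀ x, Y x = (1 + vfDeriv I X f x)⁻¹ • X x)
    (ψ : ℝ → M → M) (hψ : IsCompleteSmoothFlow I Y ψ) :
    ∃ h : Diffeomorph I I M M (⊤ : ℕ∞),
      (∀ x, h x = φ (f x) x) ∧ ∀ t x, h (ψ t x) = φ t (h x) := by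
  classical
  -- derivative of `f` along a flow curve
  have hfd : ∀ (χ : ℝ → M → M) (W : ∀ x : M, TangentSpace I x),
      IsCompleteSmoothFlow I W χ → ∀ (x : M) (t : ℝ),
      HasDerivAt (fun u => f (χ u x)) (vfDeriv I W f (χ t x)) t := by
    intro χ W hχ x t
    have hcomp : HasMFDerivAt 𝓘(ℝ, ℝ) 𝓘(ℝ, ℝ) (f ∘ fun u => χ u x) t
        ((mfderiv I 𝓘(ℝ, ℝ) f (χ t x)).comp (mfderiv 𝓘(ℝ, ℝ) I (fun u => χ u x) t)) :=
      HasMFDerivAt.comp t ((hf (χ t x)).mdifferentiableAt (by simp)).hasMFDerivAt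
        (hχ.mdiff_curve x t).hasMFDerivAt
    have h5 := (hasFDerivAt_iff_hasDerivAt (𝕜 := ℝ) (F := ℝ)).mp hcomp.hasFDerivAt
    have hval : (mfderiv I 𝓘(ℝ, ℝ) f (χ t x)).comp
        (mfderiv 𝓘(ℝ, ℝ) I (fun u => χ u x) t) (1 : ℝ)
        = vfDeriv I W f (χ t x) := by
      show mfderiv I 𝓘(ℝ, ℝ) f (χ t x) (mfderiv 𝓘(ℝ, ℝ) I (fun u => χ u x) t (1 : ℝ)) = _
      rw [hχ.deriv t x]
      rfl
    rw [← hval]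
    exact h5
  -- first key identity
  have key1 : ∀ (t : ℝ) (x : M), φ (f (ψ t x)) (ψ t x) = φ (t + f x) x := by
    intro t x
    have hAll : ∀ u : ℝ,
        HasMFDerivAt 𝓘(ℝ, ℝ) I (fun w => φ (f (ψ w x) - w - f x) (ψ w x)) u 0 := by
      intro u
      have hane : (1 + vfDeriv I X f (ψ u x)) ≠ 0 := (hpos (ψ u x)).ne'
      have ha : HasDerivAt (fun w => f (ψ w x) - w - f x)
          (vfDeriv I Y f (ψ u x) - 1) u :=
        (((hfd ψ Y hψ x u).sub (hasDerivAt_id u)).sub_const (f x))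
      obtain ⟨hcmd, hcval⟩ := hφ.comp_mfderiv (γ := fun w => ψ w x)
        (v := Y (ψ u x)) ha (hψ.mdiff_curve x u) (hψ.deriv u x)
      have e1 : mfderiv I I (φ (f (ψ u x) - u - f x)) (ψ u x) (Y (ψ u x))
          = (1 + vfDeriv I X f (ψ u x))⁻¹ • X (φ (f (ψ u x) - u - f x) (ψ u x)) := by
        rw [hY (ψ u x), (mfderiv I I (φ (f (ψ u x) - u - f x)) (ψ u x)).map_smul,
          hφ.pushforward (f (ψ u x) - u - f x) (ψ u x)]
      have e2 : vfDeriv I Y f (ψ u x)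
          = (1 + vfDeriv I X f (ψ u x))⁻¹ * vfDeriv I X f (ψ u x) := by
        show mfderiv I 𝓘(ℝ, ℝ) f (ψ u x) (Y (ψ u x)) = _
        rw [hY (ψ u x), (mfderiv I 𝓘(ℝ, ℝ) f (ψ u x)).map_smul]
        rfl
      have hzero : mfderiv 𝓘(ℝ, ℝ) I (fun w => φ (f (ψ w x) - w - f x) (ψ w x)) u (1 : ℝ)
          = 0 := by
        rw [hcval, e1, e2, ← add_smul]
        have hcoef : (1 + vfDeriv I X f (ψ u x))⁻¹ * vfDeriv I X f (ψ u x) - 1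
            + (1 + vfDeriv I X f (ψ u x))⁻¹ = 0 := by
          field_simp
          ring
        rw [hcoef, zero_smul]
      have hmfd0 : mfderiv 𝓘(ℝ, ℝ) I (fun w => φ (f (ψ w x) - w - f x) (ψ w x)) u = 0 :=
        ContinuousLinearMap.ext_ring hzero
      have hh := hcmd.hasMFDerivAt
      rw [hmfd0] at hh
      exact hh
    have hc0 : φ (f (ψ 0 x) - 0 - f x) (ψ 0 x) = x := by
      rw [hψ.init x]
      rw [show f x - 0 - f x = 0 by ring, hφ.init x]
    have hct : φ (f (ψ t x) - t - f x) (ψ t x) = x :=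
      (timeChange_const_of_mfderiv_zero hAll t 0).trans hc0
    calc φ (f (ψ t x)) (ψ t x)
        = φ ((t + f x) + (f (ψ t x) - t - f x)) (ψ t x) := by
          exact congrArg (fun r => φ r (ψ t x)) (by ring)
      _ = φ (t + f x) (φ (f (ψ t x) - t - f x) (ψ t x)) := hφ.add _ _ _
      _ = φ (t + f x) x := by rw [hct]
  -- second key identity
  have key2 : ∀ (t : ℝ) (y : M), ψ (-(f (φ t y))) (φ t y) = ψ (t - f y) y := by
    intro t y
    have hAll : ∀ u : ℝ,
        HasMFDerivAt 𝓘(ℝ, ℝ) I (fun w => ψ (-(f (φ w y)) - w + f y) (φ w y)) u 0 := by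
      intro u
      have hane : (1 + vfDeriv I X f (φ u y)) ≠ 0 := (hpos (φ u y)).ne'
      have hXp : X (φ u y) = (1 + vfDeriv I X f (φ u y)) • Y (φ u y) := by
        rw [hY (φ u y), smul_smul, mul_inv_cancel₀ hane, one_smul]
      have ha : HasDerivAt (fun w => -(f (φ w y)) - w + f y)
          (-(vfDeriv I X f (φ u y)) - 1) u :=
        (((hfd φ X hφ y u).neg.sub (hasDerivAt_id u)).add_const (f y))
      obtain ⟨hcmd, hcval⟩ := hψ.comp_mfderiv (γ := fun w => φ w y)
        (v := X (φ u y)) ha (hφ.mdiff_curve y u) (hφ.deriv u y)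
      have e1 : mfderiv I I (ψ (-(f (φ u y)) - u + f y)) (φ u y) (X (φ u y))
          = (1 + vfDeriv I X f (φ u y)) • Y (ψ (-(f (φ u y)) - u + f y) (φ u y)) := by
        rw [hXp, (mfderiv I I (ψ (-(f (φ u y)) - u + f y)) (φ u y)).map_smul,
          hψ.pushforward (-(f (φ u y)) - u + f y) (φ u y)]
      have hzero : mfderiv 𝓘(ℝ, ℝ) I (fun w => ψ (-(f (φ w y)) - w + f y) (φ w y)) u (1 : ℝ)
          = 0 := by
        rw [hcval, e1, ← add_smul]
        have hcoef : -(vfDeriv I X f (φ u y)) - 1 + (1 + vfDeriv I X f (φ u y)) = 0 := by ring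
        rw [hcoef, zero_smul]
      have hmfd0 : mfderiv 𝓘(ℝ, ℝ) I (fun w => ψ (-(f (φ w y)) - w + f y) (φ w y)) u = 0 :=
        ContinuousLinearMap.ext_ring hzero
      have hh := hcmd.hasMFDerivAt
      rw [hmfd0] at hh
      exact hh
    have hc0 : ψ (-(f (φ 0 y)) - 0 + f y) (φ 0 y) = y := by
      rw [hφ.init y]
      rw [show -(f y) - 0 + f y = 0 by ring, hψ.init y]
    have hct : ψ (-(f (φ t y)) - t + f y) (φ t y) = y :=
      (timeChange_const_of_mfderiv_zero hAll t 0).trans hc0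
    calc ψ (-(f (φ t y))) (φ t y)
        = ψ ((t - f y) + (-(f (φ t y)) - t + f y)) (φ t y) := by
          exact congrArg (fun r => ψ r (φ t y)) (by ring)
      _ = ψ (t - f y) (ψ (-(f (φ t y)) - t + f y) (φ t y)) := hψ.add _ _ _
      _ = ψ (t - f y) y := by rw [hct]
  -- assemble the diffeomorphism
  refine ⟨{ toFun := fun x => φ (f x) x
            invFun := fun y => ψ (-(f y)) y
            left_inv := ?_
            right_inv := ?_
            contMDiff_toFun := ?_
            contMDiff_invFun := ?_ }, fun x => rfl, ?_⟩
  · intro x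
    have := key2 (f x) x
    rw [sub_self, hψ.init x] at this
    exact this
  · intro y
    have := key1 (-(f y)) y
    rw [neg_add_cancel, hφ.init y] at this
    exact this
  · exact hφ.smooth.comp (hf.prodMk contMDiff_id)
  · exact hψ.smooth.comp ((hf.neg).prodMk contMDiff_id)
  · intro t x
    show φ (f (ψ t x)) (ψ t x) = φ t (φ (f x) x)
    rw [key1 t x, hφ.add t (f x) x]

end
end

section
/- Let M be a connected smooth manifold, X a smooth vector field on M admitting a complete smooth flow φ, and f : M → ℝ a smooth function such that 1 + (Xf)(x) > 0 for all x ∈ M. Let Y := X/(1 + Xf) and assume Y also admits a complete smooth flow ψ. Then the maps η, ζ : M → M defined by η(x) := φ_{f(x)}(x) and ζ(x) := ψ_{−f(x)}(x) are mutually inverse: η ∘ ζ = id_M and ζ ∘ η = id_M. -/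
open Manifold

noncomputable section

section Aux

open Metric Set

variable {E : Type*} [NormedAddCommGroup E] [NormedSpace ℝ E]
    {H : Type*} [TopologicalSpace H] {I : ModelWithCorners ℝ E H}
    {M : Type*} [TopologicalSpace M] [ChartedSpace H M] [IsManifold I (⊤ : ℕ∞) M]

/-- A smooth curve with vanishing derivative is constant. -/
theorem aux_const_of_mfderiv_zero
    {γ : ℝ → M} (hγ : ContMDiff 𝓘(ℝ, ℝ) I (⊤ : ℕ∞) γ)
    (h : ∀ t, mfderiv 𝓘(ℝ, ℝ) I γ t = 0) (t : ℝ) : γ t = γ 0 := by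
  have loc : ∀ t₀ : ℝ, ∀ᶠ t in nhds t₀, γ t = γ t₀ := by
    intro t₀
    have hU : IsOpen (γ ⁻¹' (chartAt H (γ t₀)).source) :=
      (chartAt H (γ t₀)).open_source.preimage hγ.continuous
    have ht₀ : t₀ ∈ γ ⁻¹' (chartAt H (γ t₀)).source := mem_chart_source _ _
    obtain ⟨ε, hε, hball⟩ := Metric.isOpen_iff.1 hU t₀ ht₀
    have hmem : ∀ t ∈ ball t₀ ε, γ t ∈ (chartAt H (γ t₀)).source := fun t ht => hball ht
    set g : ℝ → E := (extChartAt I (γ t₀)) ∘ γ with hg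
    have hdiff : ∀ t ∈ ball t₀ ε, DifferentiableAt ℝ g t ∧ fderiv ℝ g t = 0 := by
      intro t ht
      have h1 : MDifferentiableAt I 𝓘(ℝ, E) (extChartAt I (γ t₀)) (γ t) :=
        mdifferentiableAt_extChartAt (hmem t ht)
      have h2 : MDifferentiableAt 𝓘(ℝ, ℝ) I γ t := (hγ t).mdifferentiableAt (by simp)
      have hcomp := mfderiv_comp t h1 h2
      have hmd : MDifferentiableAt 𝓘(ℝ, ℝ) 𝓘(ℝ, E) g t := h1.comp t h2
      constructor
      · exact hmd.differentiableAt
      · have : mfderiv 𝓘(ℝ, ℝ) 𝓘(ℝ, E) g t = 0 := by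
          rw [hcomp, h t, ContinuousLinearMap.comp_zero]
        rwa [mfderiv_eq_fderiv] at this
    have hconst : ∀ t ∈ ball t₀ ε, g t = g t₀ := by
      intro t ht
      refine (convex_ball t₀ ε).is_const_of_fderivWithin_eq_zero
        (fun s hs => ((hdiff s hs).1).differentiableWithinAt) ?_ ht (mem_ball_self hε)
      intro s hs
      rw [fderivWithin_of_isOpen isOpen_ball hs]
      exact (hdiff s hs).2
    filter_upwards [Metric.ball_mem_nhds t₀ hε] with t ht
    have := hconst t ht
    have h1 := (extChartAt I (γ t₀)).left_inv
      (by rw [extChartAt_source]; exact hmem t ht)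
    have h2 := (extChartAt I (γ t₀)).left_inv
      (by rw [extChartAt_source]; exact mem_chart_source _ _)
    calc γ t = (extChartAt I (γ t₀)).symm (g t) := h1.symm
    _ = (extChartAt I (γ t₀)).symm (g t₀) := by rw [this]
    _ = γ t₀ := h2
  have hopen : IsOpen {t : ℝ | γ t = γ 0} := by
    rw [isOpen_iff_mem_nhds]
    intro a ha
    filter_upwards [loc a] with t ht using ht.trans ha
  have hclosed' : IsOpen {t : ℝ | γ t ≠ γ 0} := by
    rw [isOpen_iff_mem_nhds]
    intro a ha
    filter_upwards [loc a] with t ht using ht ▸ ha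
  have hcl : IsClosed {t : ℝ | γ t = γ 0} := by
    rw [← isOpen_compl_iff]
    exact hclosed'
  have : {t : ℝ | γ t = γ 0} = univ := by
    rcases isClopen_iff.1 ⟨hcl, hopen⟩ with h0 | h0
    · exact absurd h0 (Nonempty.ne_empty ⟨0, rfl⟩)
    · exact h0
  exact (this ▸ mem_univ t : t ∈ {t : ℝ | γ t = γ 0})

theorem aux_flow_smooth_fixTime {Y : ∀ x : M, TangentSpace I x} {ψ : ℝ → M → M}
    (hψ : IsCompleteSmoothFlow I Y ψ) (s : ℝ) : ContMDiff I I (⊤ : ℕ∞) (ψ s) :=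
  hψ.smooth.comp (contMDiff_const.prodMk contMDiff_id)

theorem aux_flow_smooth_curve {Y : ∀ x : M, TangentSpace I x} {ψ : ℝ → M → M}
    (hψ : IsCompleteSmoothFlow I Y ψ) (y : M) :
    ContMDiff 𝓘(ℝ, ℝ) I (⊤ : ℕ∞) (fun t => ψ t y) :=
  hψ.smooth.comp (contMDiff_id.prodMk contMDiff_const)

/-- The flow of `Y` pushes `Y` forward to itself. -/
theorem aux_flow_pushforward {Y : ∀ x : M, TangentSpace I x} {ψ : ℝ → M → M}
    (hψ : IsCompleteSmoothFlow I Y ψ) (s : ℝ) (y : M) :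
    mfderiv I I (ψ s) y (Y y) = Y (ψ s y) := by
  have hc1 : (fun u : ℝ => ψ (s + u) y) = (fun t => ψ t y) ∘ (fun u : ℝ => s + u) := rfl
  have hc2 : (fun u : ℝ => ψ (s + u) y) = (ψ s) ∘ (fun u : ℝ => ψ u y) := by
    funext u; exact hψ.add s u y
  have hshift : mfderiv 𝓘(ℝ, ℝ) 𝓘(ℝ, ℝ) (fun u : ℝ => s + u) 0 (1 : ℝ) = (1 : ℝ) := by
    rw [mfderiv_eq_fderiv]
    have h : HasFDerivAt (fun u : ℝ => s + u) (ContinuousLinearMap.id ℝ ℝ) 0 :=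
      (hasFDerivAt_id (0 : ℝ)).const_add s
    rw [h.fderiv]; rfl
  have hmd1 : MDifferentiableAt 𝓘(ℝ, ℝ) I (fun t => ψ t y) s :=
    ((aux_flow_smooth_curve hψ y) s).mdifferentiableAt (by simp)
  have hmd2 : MDifferentiableAt 𝓘(ℝ, ℝ) 𝓘(ℝ, ℝ) (fun u : ℝ => s + u) 0 :=
    (contDiff_const.add contDiff_id).contMDiff.mdifferentiableAt one_ne_zero
  have e1 : mfderiv 𝓘(ℝ, ℝ) I (fun u : ℝ => ψ (s + u) y) 0 (1 : ℝ) = Y (ψ s y) := by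
    rw [hc1, mfderiv_comp_of_eq hmd1 hmd2 (add_zero s)]
    show mfderiv 𝓘(ℝ, ℝ) I (fun t => ψ t y) (s + 0)
      ((mfderiv 𝓘(ℝ, ℝ) 𝓘(ℝ, ℝ) (fun u : ℝ => s + u) 0) (1 : ℝ)) = Y (ψ s y)
    rw [hshift, add_zero]
    exact hψ.deriv s y
  have hmd3 : MDifferentiableAt I I (ψ s) (ψ 0 y) :=
    ((aux_flow_smooth_fixTime hψ s) (ψ 0 y)).mdifferentiableAt (by simp)
  have hmd4 : MDifferentiableAt 𝓘(ℝ, ℝ) I (fun u : ℝ => ψ u y) 0 :=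
    ((aux_flow_smooth_curve hψ y) 0).mdifferentiableAt (by simp)
  have e2 : mfderiv 𝓘(ℝ, ℝ) I (fun u : ℝ => ψ (s + u) y) 0 (1 : ℝ)
      = mfderiv I I (ψ s) y (Y y) := by
    rw [hc2, mfderiv_comp_of_eq hmd3 hmd4 rfl]
    show mfderiv I I (ψ s) (ψ 0 y)
      ((mfderiv 𝓘(ℝ, ℝ) I (fun u : ℝ => ψ u y) 0) (1 : ℝ)) = mfderiv I I (ψ s) y (Y y)
    rw [hψ.deriv 0 y]
    have h0 : ψ 0 y = y := hψ.init y
    rw [h0]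
  rw [← e2, e1]

/-- The key reparametrisation lemma: if `γ` is a curve whose velocity is `τ' • Y ∘ γ`, then
flowing back along the flow of `Y` for time `τ t` recovers `γ 0`. -/
theorem aux_key_reparam {Y : ∀ x : M, TangentSpace I x} {ψ : ℝ → M → M}
    (hψ : IsCompleteSmoothFlow I Y ψ) {γ : ℝ → M} (hγ : ContMDiff 𝓘(ℝ, ℝ) I (⊤ : ℕ∞) γ)
    {τ : ℝ → ℝ} (hτ : ContMDiff 𝓘(ℝ, ℝ) 𝓘(ℝ, ℝ) (⊤ : ℕ∞) τ) (hτ0 : τ 0 = 0)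
    (hder : ∀ t, mfderiv 𝓘(ℝ, ℝ) I γ t (1 : ℝ) = deriv τ t • Y (γ t)) (t : ℝ) :
    ψ (-(τ t)) (γ t) = γ 0 := by
  have hτ' : ContDiff ℝ ((⊤ : ℕ∞) : WithTop ℕ∞) τ := hτ.contDiff
  have hτm : ContMDiff 𝓘(ℝ, ℝ) 𝓘(ℝ, ℝ) (⊤ : ℕ∞) (fun r => -(τ r)) := hτ.neg
  have hu : ContMDiff 𝓘(ℝ, ℝ) (𝓘(ℝ, ℝ).prod I) (⊤ : ℕ∞) (fun r : ℝ => ((-(τ r), γ r) : ℝ × M)) :=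
    hτm.prodMk hγ
  have hΓ : ContMDiff 𝓘(ℝ, ℝ) I (⊤ : ℕ∞) (fun r => ψ (-(τ r)) (γ r)) := hψ.smooth.comp hu
  have hΓd : ∀ r, mfderiv 𝓘(ℝ, ℝ) I (fun r => ψ (-(τ r)) (γ r)) r = 0 := by
    intro r
    have hΨmd : MDifferentiableAt (𝓘(ℝ, ℝ).prod I) I (fun p : ℝ × M => ψ p.1 p.2)
        ((-(τ r), γ r) : ℝ × M) := (hψ.smooth _).mdifferentiableAt (by simp)
    have humd : MDifferentiableAt 𝓘(ℝ, ℝ) (𝓘(ℝ, ℝ).prod I)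
        (fun r : ℝ => ((-(τ r), γ r) : ℝ × M)) r := ((hu r).mdifferentiableAt (by simp))
    apply ContinuousLinearMap.ext_ring
    show mfderiv 𝓘(ℝ, ℝ) I (fun r => ψ (-(τ r)) (γ r)) r (1 : ℝ) = 0
    have hcomp := mfderiv_comp r hΨmd humd
    rw [show (fun r => ψ (-(τ r)) (γ r))
        = (fun p : ℝ × M => ψ p.1 p.2) ∘ (fun r : ℝ => ((-(τ r), γ r) : ℝ × M)) from rfl,
      hcomp]
    show mfderiv (𝓘(ℝ, ℝ).prod I) I (fun p : ℝ × M => ψ p.1 p.2) ((-(τ r), γ r) : ℝ × M)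
      (mfderiv 𝓘(ℝ, ℝ) (𝓘(ℝ, ℝ).prod I) (fun r : ℝ => ((-(τ r), γ r) : ℝ × M)) r (1 : ℝ)) = 0
    have hamd : MDifferentiableAt 𝓘(ℝ, ℝ) 𝓘(ℝ, ℝ) (fun r => -(τ r)) r :=
      (hτm r).mdifferentiableAt (by simp)
    have hbmd : MDifferentiableAt 𝓘(ℝ, ℝ) I γ r := (hγ r).mdifferentiableAt (by simp)
    have ha1 : mfderiv 𝓘(ℝ, ℝ) 𝓘(ℝ, ℝ) (fun r => -(τ r)) r (1 : ℝ) = -(deriv τ r) := by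
      rw [mfderiv_eq_fderiv]
      have h1 : HasDerivAt (fun r => -(τ r)) (-(deriv τ r)) r :=
        ((hτ'.differentiable (by simp)).differentiableAt.hasDerivAt).neg
      rw [h1.hasFDerivAt.fderiv]
      exact one_smul ℝ _
    have hu1 : mfderiv 𝓘(ℝ, ℝ) (𝓘(ℝ, ℝ).prod I) (fun r : ℝ => ((-(τ r), γ r) : ℝ × M)) r (1 : ℝ)
        = ((-(deriv τ r), mfderiv 𝓘(ℝ, ℝ) I γ r (1 : ℝ)) :
            TangentSpace (𝓘(ℝ, ℝ).prod I) ((-(τ r), γ r) : ℝ × M)) := by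
      rw [hamd.mfderiv_prod hbmd]
      show (mfderiv 𝓘(ℝ, ℝ) 𝓘(ℝ, ℝ) (fun r => -(τ r)) r (1 : ℝ),
        mfderiv 𝓘(ℝ, ℝ) I γ r (1 : ℝ)) = _
      rw [ha1]
      rfl
    rw [hu1]; refine (mfderiv_prod_eq_add_apply hΨmd).trans ?_
    show mfderiv 𝓘(ℝ, ℝ) I (fun z : ℝ => ψ z (γ r)) (-(τ r)) (-(deriv τ r))
        + mfderiv I I (fun z : M => ψ (-(τ r)) z) (γ r) (mfderiv 𝓘(ℝ, ℝ) I γ r (1 : ℝ)) = 0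
    have e1 : mfderiv 𝓘(ℝ, ℝ) I (fun z : ℝ => ψ z (γ r)) (-(τ r)) (-(deriv τ r))
        = -(deriv τ r) • Y (ψ (-(τ r)) (γ r)) := by
      have h2 : (-(deriv τ r) : ℝ) = (-(deriv τ r)) • (1 : ℝ) := by simp
      conv_lhs => rw [h2]
      exact (ContinuousLinearMap.map_smul (mfderiv 𝓘(ℝ, ℝ) I (fun z : ℝ => ψ z (γ r)) (-(τ r)))
        (-(deriv τ r)) (1 : ℝ)).trans (congrArg (fun v => -(deriv τ r) • v) (hψ.deriv (-(τ r)) (γ r)))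
    have e2 : mfderiv I I (fun z : M => ψ (-(τ r)) z) (γ r) (mfderiv 𝓘(ℝ, ℝ) I γ r (1 : ℝ))
        = deriv τ r • Y (ψ (-(τ r)) (γ r)) := by
      rw [hder r, map_smul, aux_flow_pushforward hψ]
    rw [e1, e2, neg_smul, neg_add_cancel]
  have hconst := aux_const_of_mfderiv_zero hΓ hΓd t
  rw [hconst, hτ0, neg_zero, hψ.init]

/-- Derivative of a function along a smooth curve. -/
theorem aux_deriv_comp_curve {f : M → ℝ} (hf : ContMDiff I 𝓘(ℝ, ℝ) (⊤ : ℕ∞) f)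
    {c : ℝ → M} (hc : ContMDiff 𝓘(ℝ, ℝ) I (⊤ : ℕ∞) c) (t : ℝ) :
    deriv (fun t => f (c t)) t
      = mfderiv I 𝓘(ℝ, ℝ) f (c t) (mfderiv 𝓘(ℝ, ℝ) I c t (1 : ℝ)) := by
  have h1 : MDifferentiableAt I 𝓘(ℝ, ℝ) f (c t) := (hf _).mdifferentiableAt (by simp)
  have h2 : MDifferentiableAt 𝓘(ℝ, ℝ) I c t := (hc t).mdifferentiableAt (by simp)
  have hcomp := mfderiv_comp t h1 h2
  have key : mfderiv 𝓘(ℝ, ℝ) 𝓘(ℝ, ℝ) (fun t => f (c t)) t (1 : ℝ)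
      = mfderiv I 𝓘(ℝ, ℝ) f (c t) (mfderiv 𝓘(ℝ, ℝ) I c t (1 : ℝ)) := by
    rw [show (fun t => f (c t)) = f ∘ c from rfl, hcomp]
    rfl
  rw [← key, mfderiv_eq_fderiv]
  rfl

end Aux

/-- Let `X` be a smooth vector field on a connected manifold `M` with complete smooth flow `φ`,
let `f : M → ℝ` be smooth with `1 + Xf > 0` everywhere, and let `ψ` be a complete smooth flow of
`Y = X / (1 + Xf)`.  Then the maps `η x := φ (f x) x` and `ζ x := ψ (-(f x)) x` are mutually
inverse: `η ∘ ζ = id` and `ζ ∘ η = id`. -/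
theorem timeChange_maps_mutually_inverse
    {E : Type*} [NormedAddCommGroup E] [NormedSpace ℝ E]
    {H : Type*} [TopologicalSpace H] (I : ModelWithCorners ℝ E H)
    {M : Type*} [TopologicalSpace M] [ChartedSpace H M] [IsManifold I (⊤ : ℕ∞) M]
    [ConnectedSpace M]
    (X : ∀ x : M, TangentSpace I x) (hX : IsSmoothVectorField I X)
    (φ : ℝ → M → M) (hφ : IsCompleteSmoothFlow I X φ)
    (f : M → ℝ) (hf : ContMDiff I 𝓘(ℝ, ℝ) (⊤ : ℕ∞) f)
    (hpos : ∀ x, 0 < 1 + vfDeriv I X f x)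
    (Y : ∀ x : M, TangentSpace I x) (hY : ∀ x, Y x = (1 + vfDeriv I X f x)⁻¹ • X x)
    (ψ : ℝ → M → M) (hψ : IsCompleteSmoothFlow I Y ψ)
    (η ζ : M → M) (hη : ∀ x, η x = φ (f x) x) (hζ : ∀ x, ζ x = ψ (-(f x)) x) :
    η ∘ ζ = id ∧ ζ ∘ η = id := by
  have hne : ∀ x, (1 + vfDeriv I X f x) ≠ 0 := fun x => (hpos x).ne'
  -- Part 1 : ζ ∘ η = id
  have part1 : ∀ x, ζ (η x) = x := by
    intro x
    have hγ : ContMDiff 𝓘(ℝ, ℝ) I (⊤ : ℕ∞) (fun t => φ t x) := aux_flow_smooth_curve hφ x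
    have hfc : ContMDiff 𝓘(ℝ, ℝ) 𝓘(ℝ, ℝ) (⊤ : ℕ∞) (fun t => f (φ t x)) := hf.comp hγ
    have hτ : ContMDiff 𝓘(ℝ, ℝ) 𝓘(ℝ, ℝ) (⊤ : ℕ∞) (fun t => t + f (φ t x) - f x) :=
      (contMDiff_id.add hfc).sub contMDiff_const
    have hτ0 : (fun t => t + f (φ t x) - f x) 0 = 0 := by
      simp [hφ.init x]
    have hderf : ∀ t, deriv (fun t => f (φ t x)) t = vfDeriv I X f (φ t x) := by
      intro t
      rw [aux_deriv_comp_curve hf hγ t, hφ.deriv t x]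
      rfl
    have hdτ : ∀ t, deriv (fun t => t + f (φ t x) - f x) t = 1 + vfDeriv I X f (φ t x) := by
      intro t
      have hd : DifferentiableAt ℝ (fun t => f (φ t x)) t :=
        (hfc.contDiff.differentiable (by simp)).differentiableAt
      have h1 : HasDerivAt (fun t : ℝ => t + f (φ t x)) (1 + deriv (fun t => f (φ t x)) t) t :=
        (hasDerivAt_id t).add hd.hasDerivAt
      have h2 := (h1.sub_const (f x)).deriv
      rw [h2, hderf t]
    have hder : ∀ t, mfderiv 𝓘(ℝ, ℝ) I (fun t => φ t x) t (1 : ℝ)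
        = deriv (fun t => t + f (φ t x) - f x) t • Y (φ t x) := by
      intro t
      rw [hφ.deriv t x, hdτ t, hY (φ t x), smul_smul,
        mul_inv_cancel₀ (hne (φ t x)), one_smul]
    have key := aux_key_reparam hψ hγ hτ hτ0 hder (f x)
    rw [hφ.init x] at key
    have hτfx : f x + f (φ (f x) x) - f x = f (φ (f x) x) := by ring
    rw [hτfx] at key
    rw [hζ (η x), hη x]
    exact key
  -- Part 2 : η ∘ ζ = id
  have part2 : ∀ x, η (ζ x) = x := by
    intro x
    have hγ : ContMDiff 𝓘(ℝ, ℝ) I (⊤ : ℕ∞) (fun s => ψ s x) := aux_flow_smooth_curve hψ x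
    have hfc : ContMDiff 𝓘(ℝ, ℝ) 𝓘(ℝ, ℝ) (⊤ : ℕ∞) (fun s => f (ψ s x)) := hf.comp hγ
    have hτ : ContMDiff 𝓘(ℝ, ℝ) 𝓘(ℝ, ℝ) (⊤ : ℕ∞) (fun s => s - f (ψ s x) + f x) :=
      (contMDiff_id.sub hfc).add contMDiff_const
    have hτ0 : (fun s => s - f (ψ s x) + f x) 0 = 0 := by
      simp [hψ.init x]
    have hderf : ∀ s, deriv (fun s => f (ψ s x)) s
        = (1 + vfDeriv I X f (ψ s x))⁻¹ * vfDeriv I X f (ψ s x) := by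
      intro s
      rw [aux_deriv_comp_curve hf hγ s, hψ.deriv s x, hY (ψ s x), map_smul]
      rfl
    have hdτ : ∀ s, deriv (fun s => s - f (ψ s x) + f x) s
        = (1 + vfDeriv I X f (ψ s x))⁻¹ := by
      intro s
      have hd : DifferentiableAt ℝ (fun s => f (ψ s x)) s :=
        (hfc.contDiff.differentiable (by simp)).differentiableAt
      have h1 : HasDerivAt (fun s : ℝ => s - f (ψ s x)) (1 - deriv (fun s => f (ψ s x)) s) s :=
        (hasDerivAt_id s).sub hd.hasDerivAt
      have h2 := (h1.add_const (f x)).deriv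
      rw [h2, hderf s]
      have hc : (1 + vfDeriv I X f (ψ s x)) ≠ 0 := hne _
      field_simp
      ring
    have hder : ∀ s, mfderiv 𝓘(ℝ, ℝ) I (fun s => ψ s x) s (1 : ℝ)
        = deriv (fun s => s - f (ψ s x) + f x) s • X (ψ s x) := by
      intro s
      rw [hψ.deriv s x, hdτ s, hY (ψ s x)]
    have key := aux_key_reparam hφ hγ hτ hτ0 hder (-(f x))
    rw [hψ.init x] at key
    have hτfx : -(-(f x) - f (ψ (-(f x)) x) + f x) = f (ψ (-(f x)) x) := by ring
    rw [hτfx] at key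
    rw [hη (ζ x), hζ x]
    exact key
  exact ⟨funext fun x => part2 x, funext fun x => part1 x⟩

end
end

section
/- Let φ be a continuous flow on a topological space M and suppose there exist a real number c ≠ 0 and a continuous surjection p : M → Circle such that p(φ_t(x)) = e^{ict}·p(x) for all t ∈ ℝ and x ∈ M. Then φ is not topologically mixing. -/
/-- A continuous flow on a topological space: a continuous map `φ : ℝ × M → M` with
`φ 0 = id` and `φ (s+t) = φ s ∘ φ t`. -/
structure IsContinuousFlow {M : Type*} [TopologicalSpace M] (φ : ℝ → M → M) : Prop where
  continuous : Continuous (fun p : ℝ × M => φ p.1 p.2)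
  init : ∀ x, φ 0 x = x
  add : ∀ s t x, φ (s + t) x = φ s (φ t x)

/-- A flow is topologically mixing if for all nonempty open `U, V` there is `T > 0` such that
`φ t U` meets `V` for all `t ≥ T`. -/
def IsTopologicallyMixingFlow {M : Type*} [TopologicalSpace M] (φ : ℝ → M → M) : Prop :=
  ∀ U V : Set M, IsOpen U → IsOpen V → U.Nonempty → V.Nonempty →
    ∃ T > (0 : ℝ), ∀ t ≥ T, ((φ t '' U) ∩ V).Nonempty

/-! At the times `t` with `c * t ∈ 2πℤ`, which are unbounded above, `p ∘ φ t = p`. Pulling back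
two disjoint open subsets of the circle along `p` therefore gives nonempty open sets `U`, `V`
with `φ t '' U ∩ V = ∅` for arbitrarily large `t`. -/

instance : Nontrivial Circle :=
  ⟨⟨1, -1, fun h => by norm_num [Circle.ext_iff] at h⟩⟩

theorem Circle.periodic_exp_const_mul (c : ℝ) :
    Function.Periodic (fun t => Circle.exp (c * t)) (c⁻¹ * (2 * Real.pi)) :=
  Circle.periodic_exp.const_mul c

theorem Function.Periodic.exists_ge_eq_apply_zero {α β : Type*} [AddCommGroup α] [LinearOrder α]
    [IsOrderedAddMonoid α] [Archimedean α] {f : α → β} {c : α} (hf : Function.Periodic f c)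
    (hc : c ≠ 0) (T : α) : ∃ t ≥ T, f t = f 0 := by
  obtain ⟨n, hn⟩ := Archimedean.arch T (abs_pos.mpr hc)
  refine ⟨n • |c|, hn, ?_⟩
  rcases abs_choice c with h | h <;> rw [h]
  · exact hf.nsmul_eq n
  · exact hf.neg.nsmul_eq n

theorem not_isTopologicallyMixingFlow_of_factor {M X : Type*} [TopologicalSpace M]
    [TopologicalSpace X] [T2Space X] [Nontrivial X] {φ : ℝ → M → M} {p : M → X}
    (hp_cont : Continuous p) (hp_surj : Function.Surjective p)
    (hreturn : ∀ T, ∃ t ≥ T, ∀ x, p (φ t x) = p x) :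
    ¬ IsTopologicallyMixingFlow φ := by
  intro hmix
  obtain ⟨a, b, hab⟩ := exists_pair_ne X
  obtain ⟨U, V, hU, hV, haU, hbV, hUV⟩ := t2_separation hab
  obtain ⟨T, -, hT⟩ := hmix (p ⁻¹' U) (p ⁻¹' V) (hU.preimage hp_cont) (hV.preimage hp_cont)
    (hp_surj.nonempty_preimage.mpr ⟨a, haU⟩) (hp_surj.nonempty_preimage.mpr ⟨b, hbV⟩)
  obtain ⟨t, htT, ht⟩ := hreturn T
  obtain ⟨-, ⟨x, hxU, rfl⟩, hxV⟩ := hT t htT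
  rw [Set.mem_preimage, ht] at hxV
  exact hUV.le_bot ⟨hxU, hxV⟩

theorem not_mixing_of_circle_factor_general {M : Type*} [TopologicalSpace M]
    (φ : ℝ → M → M)
    (c : ℝ) (hc : c ≠ 0) (p : M → Circle) (hp_cont : Continuous p)
    (hp_surj : Function.Surjective p)
    (hequiv : ∀ (t : ℝ) (x : M), p (φ t x) = Circle.exp (c * t) * p x) :
    ¬ IsTopologicallyMixingFlow φ := by
  refine not_isTopologicallyMixingFlow_of_factor hp_cont hp_surj fun T => ?_
  have hperiod : c⁻¹ * (2 * Real.pi) ≠ 0 := mul_ne_zero (inv_ne_zero hc) Real.two_pi_pos.ne'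
  obtain ⟨t, htT, ht⟩ := (Circle.periodic_exp_const_mul c).exists_ge_eq_apply_zero hperiod T
  simp only [mul_zero, Circle.exp_zero] at ht
  exact ⟨t, htT, fun x => by rw [hequiv, ht, one_mul]⟩

/-- A continuous flow which fibers equivariantly over a nontrivial rotation flow of the circle
(i.e. admits a closed global section with constant return time) is not topologically mixing. -/
theorem not_mixing_of_circle_factor {M : Type*} [TopologicalSpace M]
    (φ : ℝ → M → M) (hφ : IsContinuousFlow φ)
    (c : ℝ) (hc : c ≠ 0) (p : M → Circle) (hp_cont : Continuous p)
    (hp_surj : Function.Surjective p)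
    (hequiv : ∀ (t : ℝ) (x : M), p (φ t x) = Circle.exp (c * t) * p x) :
    ¬ IsTopologicallyMixingFlow φ :=
  not_mixing_of_circle_factor_general φ c hc p hp_cont hp_surj hequiv
end
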